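/- arXiv:1307.5503 — 5 statements merged into one kernel-verified Lean document; each statement's English description precedes it below -/
import Mathlib

section
/- For every fixed p with 0 < p ≤ 1, the sequence a_n = Σ_{s=1}^{⌊n/2⌋} C(n,s)·(1−p)^{s(n−s)} tends to 0 as n → ∞. -/
open Filter

/-- For every fixed `0 < p ≤ 1`, the sequence
`a_n = ∑_{s=1}^{⌊n/2⌋} C(n,s) (1-p)^{s(n-s)}` tends to `0` as `n → ∞`. -/
theorem sum_choose_pow_tendsto_zero (p : ℝ) (hp0 : 0 < p) (hp1 : p ≤ 1) :
    Tendsto (fun n : ℕ => ∑ s ∈ Finset.Icc 1 (n / 2),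
        (n.choose s : ℝ) * (1 - p) ^ (s * (n - s))) atTop (nhds 0) := by
  set q : ℝ := 1 - p with hq
  have hq0 : 0 ≤ q := by simp [hq]; linarith
  have hq1 : q < 1 := by simp [hq]; linarith
  set r : ℝ := Real.sqrt q with hr
  have hr0 : 0 ≤ r := Real.sqrt_nonneg q
  have hr1 : r < 1 := by
    rw [hr, show (1:ℝ) = Real.sqrt 1 by simp]
    exact Real.sqrt_lt_sqrt hq0 hq1
  have hrq : r ^ 2 = q := Real.sq_sqrt hq0
  have hkey : ∀ n : ℕ, q ^ (n - n / 2) ≤ r ^ n := by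
    intro n
    have h1 : q ^ (n - n / 2) = r ^ (2 * (n - n / 2)) := by rw [pow_mul, hrq]
    rw [h1]
    exact pow_le_pow_of_le_one hr0 hr1.le (by omega)
  have hg : Tendsto (fun n : ℕ => (n : ℝ) ^ 2 * r ^ n) atTop (nhds 0) :=
    tendsto_pow_const_mul_const_pow_of_lt_one 2 hr0 hr1
  have hg1 : Tendsto (fun n : ℕ => (n : ℝ) * r ^ n) atTop (nhds 0) := by
    simpa using tendsto_pow_const_mul_const_pow_of_lt_one 1 hr0 hr1
  have hx : ∀ᶠ n : ℕ in atTop, (n : ℝ) * q ^ (n - n / 2) ≤ 1 := by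
    filter_upwards [hg1.eventually_lt_const one_pos] with n hn
    calc (n : ℝ) * q ^ (n - n / 2) ≤ (n : ℝ) * r ^ n := by
          exact mul_le_mul_of_nonneg_left (hkey n) (Nat.cast_nonneg n)
      _ ≤ 1 := hn.le
  apply squeeze_zero' ?_ ?_ hg
  · filter_upwards with n
    apply Finset.sum_nonneg
    intro s _
    positivity
  · filter_upwards [hx] with n hn
    set x : ℝ := (n : ℝ) * q ^ (n - n / 2) with hxdef
    have hx0 : 0 ≤ x := by positivity
    have hterm : ∀ s ∈ Finset.Icc 1 (n / 2),
        (n.choose s : ℝ) * q ^ (s * (n - s)) ≤ x := by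
      intro s hs
      rw [Finset.mem_Icc] at hs
      have hcb : (n.choose s : ℝ) ≤ (n : ℝ) ^ s := by
        exact_mod_cast Nat.choose_le_pow n s
      have hexp : q ^ (s * (n - s)) ≤ (q ^ (n - n / 2)) ^ s := by
        rw [← pow_mul]
        exact pow_le_pow_of_le_one hq0 hq1.le (by
          have h2 : n / 2 ≤ n := Nat.div_le_self n 2
          have : n - n / 2 ≤ n - s := by omega
          calc (n - n / 2) * s ≤ (n - s) * s := Nat.mul_le_mul_right s this
            _ = s * (n - s) := Nat.mul_comm _ _)
      calc (n.choose s : ℝ) * q ^ (s * (n - s))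
          ≤ (n : ℝ) ^ s * (q ^ (n - n / 2)) ^ s := by
            apply mul_le_mul hcb hexp (by positivity) (by positivity)
        _ = x ^ s := by rw [hxdef, mul_pow]
        _ ≤ x := pow_le_of_le_one hx0 hn (by omega)
    calc ∑ s ∈ Finset.Icc 1 (n / 2), (n.choose s : ℝ) * q ^ (s * (n - s))
        ≤ ∑ _s ∈ Finset.Icc 1 (n / 2), x := Finset.sum_le_sum hterm
      _ = (n / 2 : ℕ) * x := by
          rw [Finset.sum_const, Nat.card_Icc]; simp
      _ ≤ (n : ℝ) * x := by
          apply mul_le_mul_of_nonneg_right _ hx0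
          exact_mod_cast Nat.div_le_self n 2
      _ = (n : ℝ) ^ 2 * q ^ (n - n / 2) := by rw [hxdef]; ring
      _ ≤ (n : ℝ) ^ 2 * r ^ n := mul_le_mul_of_nonneg_left (hkey n) (by positivity)
end

section
/- Let A be a row-stochastic n×n real matrix all of whose entries satisfy a_{ij} ≥ α for some α ≥ 0, and let μ, ν be probability vectors in ℝ^n. Then d(μA, νA) ≤ (1−α)·d(μ, ν), where d(μ,ν) = ½ Σ_{i=1}^n |μ_i − ν_i| is the total-variation distance. -/
/-- If all the entries of the row-stochastic matrix `A` are at least `α ≥ 0`, then right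
multiplication by `A` contracts total-variation distance between probability vectors
by a factor `1 - α`. -/
theorem tv_dist_vecMul_le_of_entries_ge (n : ℕ) (A : Matrix (Fin n) (Fin n) ℝ)
    (α : ℝ) (hα : 0 ≤ α) (hA0 : ∀ i j, 0 ≤ A i j) (hAα : ∀ i j, α ≤ A i j)
    (hA1 : ∀ i, ∑ j, A i j = 1)
    (μ ν : Fin n → ℝ) (hμ0 : ∀ i, 0 ≤ μ i) (hμ1 : ∑ i, μ i = 1)
    (hν0 : ∀ i, 0 ≤ ν i) (hν1 : ∑ i, ν i = 1) :
    (1 / 2) * ∑ j, |Matrix.vecMul μ A j - Matrix.vecMul ν A j| ≤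
      (1 - α) * ((1 / 2) * ∑ i, |μ i - ν i|) := by
  rcases Nat.eq_zero_or_pos n with hn | hn
  · subst hn; simp at hμ1
  have hd0 : ∑ i, (μ i - ν i) = 0 := by
    rw [Finset.sum_sub_distrib, hμ1, hν1]; ring
  have key : ∀ j, |Matrix.vecMul μ A j - Matrix.vecMul ν A j|
      ≤ ∑ i, |μ i - ν i| * (A i j - α) := by
    intro j
    have h1 : Matrix.vecMul μ A j - Matrix.vecMul ν A j
        = ∑ i, (μ i - ν i) * (A i j - α) := by
      have : ∑ i, (μ i - ν i) * (A i j - α)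
          = ∑ i, (μ i - ν i) * A i j - (∑ i, (μ i - ν i)) * α := by
        rw [Finset.sum_mul, ← Finset.sum_sub_distrib]; exact Finset.sum_congr rfl fun i _ => by ring
      rw [this, hd0]
      simp [Matrix.vecMul, dotProduct, sub_mul, Finset.sum_sub_distrib]
    rw [h1]
    calc |∑ i, (μ i - ν i) * (A i j - α)| ≤ ∑ i, |(μ i - ν i) * (A i j - α)| :=
          Finset.abs_sum_le_sum_abs _ _
      _ = ∑ i, |μ i - ν i| * (A i j - α) := by
          refine Finset.sum_congr rfl fun i _ => ?_
          rw [abs_mul, abs_of_nonneg (sub_nonneg.2 (hAα i j))]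
  have h2 : ∑ j, |Matrix.vecMul μ A j - Matrix.vecMul ν A j|
      ≤ (1 - n * α) * ∑ i, |μ i - ν i| := by
    calc ∑ j, |Matrix.vecMul μ A j - Matrix.vecMul ν A j|
        ≤ ∑ j, ∑ i, |μ i - ν i| * (A i j - α) :=
          Finset.sum_le_sum fun j _ => key j
      _ = ∑ i, |μ i - ν i| * (1 - n * α) := by
          rw [Finset.sum_comm]
          refine Finset.sum_congr rfl fun i _ => ?_
          rw [← Finset.mul_sum, Finset.sum_sub_distrib, hA1 i]
          simp [mul_comm]
      _ = (1 - n * α) * ∑ i, |μ i - ν i| := by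
          rw [Finset.mul_sum]; exact Finset.sum_congr rfl fun i _ => mul_comm _ _
  have habs : (0:ℝ) ≤ ∑ i, |μ i - ν i| := Finset.sum_nonneg fun i _ => abs_nonneg _
  have h3 : (1 - (n:ℝ) * α) * ∑ i, |μ i - ν i| ≤ (1 - α) * ∑ i, |μ i - ν i| := by
    apply mul_le_mul_of_nonneg_right _ habs
    have : (1:ℝ) ≤ (n:ℝ) := by exact_mod_cast hn
    nlinarith
  nlinarith [h2, h3]
end

section
/- Let Q be an n×n real matrix with nonnegative entries that is substochastic (every row sum is at most 1) and primitive (there exists k ≥ 1 such that every entry of Q^k is strictly positive). Then there exists a unique probability vector d ∈ ℝ^n such that d Q = ρ d for some real ρ > 0; moreover ρ is the dominant (Perron) eigenvalue of Q. In other words, the Markov chain with absorbing state 0 and transient transition block Q has a unique quasi-stationary distribution. -/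
/-!
Put `A = Qᵏ`, an entrywise positive matrix. Among pairs `(x, r)` with `x` a probability vector
and `r x ≤ x A` (a compact set once `r` is bounded by the sum of the entries of `A`), take one
with `r` maximal. If `r x ≠ x A`, multiplying the defect by `A` makes it entrywise positive, so
the normalization of `x A` admits a larger `r`; hence `x A = r x`, and such an `x` is positive.

If `d > 0` and `e ≥ 0` are left eigenvectors of `A` for eigenvalues `ρ ≥ σ`, the largest `t` with
`t d ≤ e` makes `e - t d` nonnegative and zero at some coordinate, where
`(e - t d) A ≤ σ (e - t d) = 0`; as a nonzero nonnegative vector times `A` is positive, `e = t d`.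
Swapping the roles handles `σ > ρ`. Since `Q` commutes with `A`, `d Q` is such an `e`, which gives
`d Q = ρ d`, and every quasi-stationary distribution of `Q` is a left eigenvector of `A`.

An eigenvector `v` of `Q` for `μ` satisfies `‖μ‖ |v| ≤ Q |v|` entrywise; pairing with `d` gives
`‖μ‖ ≤ ρ`.
-/

open Filter Finset Matrix Topology

lemma exists_gt_forall_mul_lt {ι : Type*} [Finite ι] {y z : ι → ℝ} {r : ℝ}
    (h : ∀ j, r * y j < z j) : ∃ r' > r, ∀ j, r' * y j < z j := by
  have hev : ∀ᶠ r' in 𝓝 r, ∀ j, r' * y j < z j := eventually_all.2 fun j =>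
    (continuous_mul_const (y j)).continuousAt.eventually_lt continuousAt_const (h j)
  obtain ⟨r', hr, hr'⟩ :=
    (eventually_mem_nhdsWithin.and (hev.filter_mono nhdsWithin_le_nhds)).exists (f := 𝓝[>] r)
  exact ⟨r', hr, hr'⟩

namespace Matrix

variable {ι : Type*} [Fintype ι]

lemma vecMul_pow_eq_pow_smul {R : Type*} [CommSemiring R] [DecidableEq ι] {Q : Matrix ι ι R}
    {x : ι → R} {r : R} (h : x ᵥ* Q = r • x) (m : ℕ) : x ᵥ* (Q ^ m) = r ^ m • x := by
  induction m with
  | zero => simp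
  | succ m ih => rw [pow_succ, ← vecMul_vecMul, ih, smul_vecMul, h, smul_smul, pow_succ]

variable {A : Matrix ι ι ℝ}

lemma vecMul_nonneg (hA : ∀ i j, 0 ≤ A i j) {x : ι → ℝ} (hx : 0 ≤ x) : 0 ≤ x ᵥ* A :=
  fun j => dotProduct_nonneg_of_nonneg hx fun i => hA i j

lemma le_sum_sum_of_smul_le_vecMul (hA : ∀ i j, 0 ≤ A i j) {x : ι → ℝ}
    (hx : x ∈ stdSimplex ℝ ι) {r : ℝ} (h : r • x ≤ x ᵥ* A) : r ≤ ∑ i, ∑ j, A i j :=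
  calc r = ∑ j, r * x j := by rw [← mul_sum, hx.2, mul_one]
    _ ≤ ∑ j, (x ᵥ* A) j := sum_le_sum fun j _ => h j
    _ = ∑ i, x i * ∑ j, A i j := by simp only [vecMul, dotProduct, mul_sum]; exact sum_comm
    _ ≤ ∑ i, ∑ j, A i j := sum_le_sum fun i _ =>
      mul_le_of_le_one_left (sum_nonneg fun j _ => hA i j) (mem_Icc_of_mem_stdSimplex hx i).2

lemma norm_smul_le_mulVec_norm (hA : ∀ i j, 0 ≤ A i j) {v : ι → ℂ} {μ : ℂ}
    (hv : A.map (fun x => (x : ℂ)) *ᵥ v = μ • v) :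
    ‖μ‖ • (fun i => ‖v i‖) ≤ A *ᵥ fun i => ‖v i‖ := by
  intro j
  calc ‖μ‖ * ‖v j‖ = ‖∑ i, (A j i : ℂ) * v i‖ := by
        rw [← norm_mul, ← smul_eq_mul, ← Pi.smul_apply, ← hv]; rfl
    _ ≤ ∑ i, ‖(A j i : ℂ) * v i‖ := norm_sum_le _ _
    _ = (A *ᵥ fun i => ‖v i‖) j := by
        simp only [norm_mul, Complex.norm_real, Real.norm_of_nonneg (hA _ _)]; rfl

lemma norm_le_of_hasEigenvalue [DecidableEq ι] (hA : ∀ i j, 0 ≤ A i j) {d : ι → ℝ}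
    (hd : ∀ i, 0 < d i) {ρ : ℝ} (hdA : d ᵥ* A = ρ • d) {μ : ℂ}
    (hμ : Module.End.HasEigenvalue (toLin' (A.map (fun x => (x : ℂ)))) μ) : ‖μ‖ ≤ ρ := by
  obtain ⟨v, hv⟩ := hμ.exists_hasEigenvector
  set u : ι → ℝ := fun i => ‖v i‖
  have hμu : ‖μ‖ • u ≤ A *ᵥ u := norm_smul_le_mulVec_norm hA (by
    rw [← toLin'_apply]; exact hv.apply_eq_smul)
  obtain ⟨i, hi⟩ := Function.ne_iff.1 hv.2
  have hdu : 0 < d ⬝ᵥ u := sum_pos' (fun j _ => mul_nonneg (hd j).le (norm_nonneg _))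
    ⟨i, mem_univ i, mul_pos (hd i) (norm_pos_iff.2 hi)⟩
  refine le_of_mul_le_mul_right ?_ hdu
  calc ‖μ‖ * (d ⬝ᵥ u) = d ⬝ᵥ (‖μ‖ • u) := by rw [dotProduct_smul, smul_eq_mul]
    _ ≤ d ⬝ᵥ (A *ᵥ u) := dotProduct_le_dotProduct_of_nonneg_left hμu fun i => (hd i).le
    _ = ρ * (d ⬝ᵥ u) := by rw [dotProduct_mulVec, hdA, smul_dotProduct, smul_eq_mul]

lemma vecMul_apply_pos (hA : ∀ i j, 0 < A i j) {x : ι → ℝ} (hx : 0 ≤ x) (hx0 : x ≠ 0)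
    (j : ι) : 0 < (x ᵥ* A) j := by
  obtain ⟨i, hi⟩ := (Pi.lt_def.1 (hx.lt_of_ne' hx0)).2
  exact sum_pos' (fun i _ => mul_nonneg (hx i) (hA i j).le) ⟨i, mem_univ i, mul_pos hi (hA i j)⟩

lemma pos_of_vecMul_eq_smul (hA : ∀ i j, 0 < A i j) {x : ι → ℝ} (hx : 0 ≤ x) (hx0 : x ≠ 0)
    {r : ℝ} (hxA : x ᵥ* A = r • x) (j : ι) : 0 < x j := by
  have h := vecMul_apply_pos hA hx hx0 j
  rw [hxA, Pi.smul_apply, smul_eq_mul] at h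
  exact pos_of_mul_pos_right h (pos_of_mul_pos_left h (hx j)).le

lemma exists_eq_smul_of_vecMul_eq_smul_of_le (hA : ∀ i j, 0 < A i j) {d e : ι → ℝ} {ρ σ : ℝ}
    (hd : ∀ i, 0 < d i) (hdA : d ᵥ* A = ρ • d) (he : 0 ≤ e) (heA : e ᵥ* A = σ • e)
    (hσρ : σ ≤ ρ) : ∃ t : ℝ, e = t • d := by
  rcases isEmpty_or_nonempty ι with hι | hι
  · exact ⟨0, Subsingleton.elim _ _⟩
  obtain ⟨i₀, -, hi₀⟩ := exists_min_image univ (fun i => e i / d i) univ_nonempty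
  set t := e i₀ / d i₀
  have ht : 0 ≤ t := div_nonneg (he i₀) (hd i₀).le
  have htd : t • d ≤ e := fun i => (le_div_iff₀ (hd i)).1 (hi₀ i (mem_univ i))
  have hti₀ : e i₀ = t * d i₀ := (div_mul_cancel₀ _ (hd i₀).ne').symm
  refine ⟨t, by_contra fun hne => ?_⟩
  have hpos := vecMul_apply_pos hA (sub_nonneg.2 htd) (sub_ne_zero.2 hne) i₀
  rw [sub_vecMul, smul_vecMul, hdA, heA] at hpos
  simp only [Pi.sub_apply, Pi.smul_apply, smul_eq_mul, hti₀] at hpos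
  nlinarith [mul_nonneg (sub_nonneg.2 hσρ) (mul_nonneg ht (hd i₀).le)]

theorem exists_eq_smul_of_vecMul_eq_smul (hA : ∀ i j, 0 < A i j) {d e : ι → ℝ} {ρ σ : ℝ}
    (hd : ∀ i, 0 < d i) (hdA : d ᵥ* A = ρ • d) (he : 0 ≤ e) (heA : e ᵥ* A = σ • e) :
    ∃ t : ℝ, e = t • d := by
  rcases le_total σ ρ with hσρ | hρσ
  · exact exists_eq_smul_of_vecMul_eq_smul_of_le hA hd hdA he heA hσρ
  rcases eq_or_ne e 0 with rfl | he0
  · exact ⟨0, (zero_smul ℝ d).symm⟩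
  obtain ⟨t, ht⟩ := exists_eq_smul_of_vecMul_eq_smul_of_le hA
    (pos_of_vecMul_eq_smul hA he he0 heA) heA (fun i => (hd i).le) hdA hρσ
  have ht0 : t ≠ 0 := by
    rintro rfl
    obtain ⟨i, -⟩ := Function.ne_iff.1 he0
    simpa [ht] using hd i
  exact ⟨t⁻¹, by rw [ht, inv_smul_smul₀ ht0]⟩

lemma exists_gt_smul_le_vecMul (hA : ∀ i j, 0 < A i j) {x : ι → ℝ} (hx : x ∈ stdSimplex ℝ ι)
    {r : ℝ} (h : r • x ≤ x ᵥ* A) (hne : r • x ≠ x ᵥ* A) :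
    ∃ y ∈ stdSimplex ℝ ι, ∃ r' > r, r' • y ≤ y ᵥ* A := by
  have hx0 : x ≠ 0 := fun h0 => by simpa [h0] using hx.2
  set e := x ᵥ* A
  have he : ∀ j, 0 < e j := vecMul_apply_pos hA hx.1 hx0
  have hlt : ∀ j, r * e j < (e ᵥ* A) j := fun j => by
    have := vecMul_apply_pos hA (sub_nonneg.2 h) (sub_ne_zero.2 hne.symm) j
    rwa [sub_vecMul, smul_vecMul, Pi.sub_apply, sub_pos] at this
  obtain ⟨r', hr', hr'e⟩ := exists_gt_forall_mul_lt hlt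
  obtain ⟨i, -⟩ := Function.ne_iff.1 hx0
  set s := ∑ j, e j
  have hs : 0 < s := sum_pos (fun j _ => he j) ⟨i, mem_univ i⟩
  refine ⟨s⁻¹ • e, ⟨fun j => mul_nonneg (inv_nonneg.2 hs.le) (he j).le, ?_⟩, r', hr', ?_⟩
  · simp only [Pi.smul_apply, smul_eq_mul, ← mul_sum]
    exact inv_mul_cancel₀ hs.ne'
  · rw [smul_vecMul, smul_comm]
    exact smul_le_smul_of_nonneg_left (fun j => (hr'e j).le) (inv_nonneg.2 hs.le)

theorem exists_perron_vector [Nonempty ι] (hA : ∀ i j, 0 < A i j) :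
    ∃ d : ι → ℝ, ∃ ρ : ℝ, (∀ i, 0 < d i) ∧ ∑ i, d i = 1 ∧ 0 < ρ ∧ d ᵥ* A = ρ • d := by
  have hA0 : ∀ i j, 0 ≤ A i j := fun i j => (hA i j).le
  set K : Set ((ι → ℝ) × ℝ) :=
    stdSimplex ℝ ι ×ˢ Set.Icc 0 (∑ i, ∑ j, A i j) ∩ {p | p.2 • p.1 ≤ p.1 ᵥ* A}
  have hK : IsCompact K := ((isCompact_stdSimplex ℝ ι).prod isCompact_Icc).inter_right
    (isClosed_le (by fun_prop) (by fun_prop))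
  obtain ⟨i⟩ := ‹Nonempty ι›
  classical
  have hK0 : (Pi.single i 1, 0) ∈ K := ⟨⟨single_mem_stdSimplex ℝ i, le_rfl,
    sum_nonneg fun i _ => sum_nonneg fun j _ => hA0 i j⟩,
    by simpa using vecMul_nonneg hA0 (single_mem_stdSimplex ℝ i).1⟩
  obtain ⟨⟨d, ρ⟩, ⟨⟨hd, hρ0, -⟩, hle⟩, hmax⟩ :=
    hK.exists_isMaxOn ⟨_, hK0⟩ continuous_snd.continuousOn
  have hdA : d ᵥ* A = ρ • d := by
    by_contra hne
    obtain ⟨y, hy, r', hr', hy'⟩ := exists_gt_smul_le_vecMul hA hd hle (Ne.symm hne)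
    exact hr'.not_ge <| isMaxOn_iff.1 hmax (y, r')
      ⟨⟨hy, hρ0.trans hr'.le, le_sum_sum_of_smul_le_vecMul hA0 hy hy'⟩, hy'⟩
  have hd0 : d ≠ 0 := fun h0 => by simpa [h0] using hd.2
  have hdpos := pos_of_vecMul_eq_smul hA hd.1 hd0 hdA
  have hρ := vecMul_apply_pos hA hd.1 hd0 i
  rw [hdA, Pi.smul_apply, smul_eq_mul] at hρ
  exact ⟨d, ρ, hdpos, hd.2, pos_of_mul_pos_left hρ (hdpos i).le, hdA⟩

end Matrix

theorem quasi_stationary_exists_unique_general (n : ℕ) (hn : 0 < n)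
    (Q : Matrix (Fin n) (Fin n) ℝ)
    (hQ0 : ∀ i j, 0 ≤ Q i j)
    (hprim : ∃ k : ℕ, 1 ≤ k ∧ ∀ i j, 0 < (Q ^ k) i j) :
    ∃ d : Fin n → ℝ, ∃ ρ : ℝ,
      (∀ i, 0 ≤ d i) ∧ (∑ i, d i = 1) ∧ 0 < ρ ∧ Matrix.vecMul d Q = ρ • d ∧
      (∀ μ : ℂ,
        Module.End.HasEigenvalue (Matrix.toLin' (Q.map (fun x => (x : ℂ)))) μ →
          ‖μ‖ ≤ ρ) ∧
      (∀ d' : Fin n → ℝ, ∀ ρ' : ℝ, (∀ i, 0 ≤ d' i) → (∑ i, d' i = 1) → 0 < ρ' →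
        Matrix.vecMul d' Q = ρ' • d' → d' = d) := by
  obtain ⟨k, hk, hA⟩ := hprim
  have : Nonempty (Fin n) := Fin.pos_iff_nonempty.1 hn
  obtain ⟨d, lam, hd, hdsum, hlam, hdA⟩ := exists_perron_vector hA
  have hdQA : (d ᵥ* Q) ᵥ* Q ^ k = lam • (d ᵥ* Q) := by
    rw [vecMul_vecMul, ← pow_succ', pow_succ, ← vecMul_vecMul, hdA, smul_vecMul]
  obtain ⟨ρ, hdQ⟩ :=
    exists_eq_smul_of_vecMul_eq_smul hA hd hdA (vecMul_nonneg hQ0 fun i => (hd i).le) hdQA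
  have hρ : 0 < ρ := by
    obtain ⟨i⟩ := ‹Nonempty (Fin n)›
    have hρk : ρ ^ k = lam := mul_right_cancel₀ (hd i).ne'
      (congrFun ((vecMul_pow_eq_pow_smul hdQ k).symm.trans hdA) i)
    have hρ0 : 0 ≤ ρ := nonneg_of_mul_nonneg_left
      (by simpa [hdQ] using vecMul_nonneg hQ0 (fun i => (hd i).le) i) (hd i)
    refine hρ0.lt_of_ne' fun h0 => ?_
    rw [h0, zero_pow (by omega)] at hρk
    exact hlam.ne hρk
  refine ⟨d, ρ, fun i => (hd i).le, hdsum, hρ, hdQ,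
    fun μ hμ => norm_le_of_hasEigenvalue hQ0 hd hdQ hμ, ?_⟩
  intro d' ρ' hd' hd'sum _ hd'Q
  obtain ⟨t, rfl⟩ := exists_eq_smul_of_vecMul_eq_smul hA hd hdA hd' (vecMul_pow_eq_pow_smul hd'Q k)
  have ht : t = 1 := by simpa [← mul_sum, hdsum] using hd'sum
  rw [ht, one_smul]

/-- A substochastic, primitive nonnegative matrix `Q` (the transient block of an
absorbing Markov chain) has a unique quasi-stationary distribution: a unique probability
vector `d` with `d Q = ρ d` for some `ρ > 0`; moreover `ρ` is the dominant (Perron)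
eigenvalue of `Q`. -/
theorem quasi_stationary_exists_unique (n : ℕ) (hn : 0 < n)
    (Q : Matrix (Fin n) (Fin n) ℝ)
    (hQ0 : ∀ i j, 0 ≤ Q i j) (hsub : ∀ i, ∑ j, Q i j ≤ 1)
    (hprim : ∃ k : ℕ, 1 ≤ k ∧ ∀ i j, 0 < (Q ^ k) i j) :
    ∃ d : Fin n → ℝ, ∃ ρ : ℝ,
      (∀ i, 0 ≤ d i) ∧ (∑ i, d i = 1) ∧ 0 < ρ ∧ Matrix.vecMul d Q = ρ • d ∧
      (∀ μ : ℂ,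
        Module.End.HasEigenvalue (Matrix.toLin' (Q.map (fun x => (x : ℂ)))) μ →
          ‖μ‖ ≤ ρ) ∧
      (∀ d' : Fin n → ℝ, ∀ ρ' : ℝ, (∀ i, 0 ≤ d' i) → (∑ i, d' i = 1) → 0 < ρ' →
        Matrix.vecMul d' Q = ρ' • d' → d' = d) :=
  quasi_stationary_exists_unique_general n hn Q hQ0 hprim
end

section
/- Let Q be an n×n real matrix with nonnegative entries that is substochastic (every row sum is at most 1) and primitive (there exists k ≥ 1 with every entry of Q^k strictly positive), and let d be its unique probability left eigenvector with d Q = ρ d, ρ > 0. Then for every probability vector π ∈ ℝ^n and every index j, lim_{t→∞} (π Q^t)_j / (Σ_{k=1}^n (π Q^t)_k) = d_j. That is, the distribution of the absorbing chain at time t, conditioned on non-absorption up to time t, converges to the quasi-stationary distribution d regardless of the initial distribution π. -/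
open Filter

private lemma vecMul_entry' {n : ℕ} (v : Fin n → ℝ) (M : Matrix (Fin n) (Fin n) ℝ) (j : Fin n) :
    Matrix.vecMul v M j = ∑ i, v i * M i j := by
  rw [Matrix.vecMul]; simp [dotProduct]

private lemma eig_pow' {n : ℕ} (d : Fin n → ℝ) (Q : Matrix (Fin n) (Fin n) ℝ) (ρ : ℝ)
    (hdQ : Matrix.vecMul d Q = ρ • d) : ∀ m, Matrix.vecMul d (Q ^ m) = ρ ^ m • d := by
  intro m
  induction m with
  | zero => simp [Matrix.vecMul_one]
  | succ m ih =>
      rw [pow_succ, ← Matrix.vecMul_vecMul, ih, Matrix.smul_vecMul, hdQ, smul_smul, pow_succ]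

set_option maxHeartbeats 1000000 in
/-- Convergence to the quasi-stationary distribution: for a substochastic primitive
matrix `Q` with unique probability left eigenvector `d` (`d Q = ρ d`, `ρ > 0`), the
distribution at time `t` of the absorbing chain conditioned on non-absorption converges
to `d`, regardless of the initial probability distribution `π`. -/
theorem conditional_distribution_tendsto_quasi_stationary (n : ℕ) (hn : 0 < n)
    (Q : Matrix (Fin n) (Fin n) ℝ)
    (hQ0 : ∀ i j, 0 ≤ Q i j) (hsub : ∀ i, ∑ j, Q i j ≤ 1)
    (hprim : ∃ k : ℕ, 1 ≤ k ∧ ∀ i j, 0 < (Q ^ k) i j)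
    (d : Fin n → ℝ) (ρ : ℝ) (hd0 : ∀ i, 0 ≤ d i) (hd1 : ∑ i, d i = 1)
    (hρ : 0 < ρ) (hdQ : Matrix.vecMul d Q = ρ • d)
    (π : Fin n → ℝ) (hπ0 : ∀ i, 0 ≤ π i) (hπ1 : ∑ i, π i = 1) (j : Fin n) :
    Tendsto
      (fun t : ℕ => Matrix.vecMul π (Q ^ t) j / ∑ k, Matrix.vecMul π (Q ^ t) k)
      atTop (nhds (d j)) := by
  haveI : NeZero n := ⟨hn.ne'⟩
  obtain ⟨k, hk1, hQk⟩ := hprim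
  have hkpos : 0 < k := hk1
  have hne : (Finset.univ : Finset (Fin n)).Nonempty := Finset.univ_nonempty
  have hρk : 0 < ρ ^ k := pow_pos hρ k
  -- entries of powers of Q are nonnegative
  have hQm0 : ∀ m i jj, 0 ≤ (Q ^ m) i jj := by
    intro m
    induction m with
    | zero => intro i jj; by_cases h : i = jj <;> simp [h, Matrix.one_apply]
    | succ m ih =>
        intro i jj
        rw [pow_succ, Matrix.mul_apply]
        exact Finset.sum_nonneg fun l _ => mul_nonneg (ih i l) (hQ0 l jj)
  have heig : ∀ m, Matrix.vecMul d (Q ^ m) = ρ ^ m • d := eig_pow' d Q ρ hdQ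
  have heig' : ∀ m jj, ∑ i, d i * (Q ^ m) i jj = ρ ^ m * d jj := by
    intro m jj
    have := congrFun (heig m) jj
    rw [vecMul_entry'] at this
    simpa using this
  -- d is strictly positive
  obtain ⟨i0, hi0⟩ : ∃ i, 0 < d i := by
    by_contra h
    push_neg at h
    have : ∀ i, d i = 0 := fun i => le_antisymm (h i) (hd0 i)
    simp [this] at hd1
  have hdpos : ∀ i, 0 < d i := by
    intro i
    have h1 : d i0 * (Q ^ k) i0 i ≤ ρ ^ k * d i := by
      rw [← heig' k i]
      exact Finset.single_le_sum (fun l _ => mul_nonneg (hd0 l) (hQm0 k l i))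
        (Finset.mem_univ i0)
    nlinarith [hQk i0 i, mul_pos hi0 (hQk i0 i)]
  -- the evolving (sub-probability) vector
  set y : ℕ → Fin n → ℝ := fun t => Matrix.vecMul π (Q ^ t) with hy
  have hyE : ∀ t i, y t i = ∑ l, π l * (Q ^ t) l i := fun t i => vecMul_entry' π (Q ^ t) i
  have hy0 : ∀ t i, 0 ≤ y t i := by
    intro t i; rw [hyE]
    exact Finset.sum_nonneg fun l _ => mul_nonneg (hπ0 l) (hQm0 t l i)
  have hstep : ∀ t m, y (t + m) = Matrix.vecMul (y t) (Q ^ m) := by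
    intro t m
    rw [hy]
    simp only []
    rw [Matrix.vecMul_vecMul, ← pow_add]
  -- min and max ratios
  set r : ℕ → ℝ := fun t => Finset.univ.inf' hne (fun i => y t i / d i) with hrdef
  set R : ℕ → ℝ := fun t => Finset.univ.sup' hne (fun i => y t i / d i) with hRdef
  have h_rd : ∀ t i, r t * d i ≤ y t i := fun t i =>
    (le_div_iff₀ (hdpos i)).mp (Finset.inf'_le _ (Finset.mem_univ i))
  have h_Rd : ∀ t i, y t i ≤ R t * d i := fun t i =>
    (div_le_iff₀ (hdpos i)).mp
      (Finset.le_sup' (fun i => y t i / d i) (Finset.mem_univ i))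
  have h_rR : ∀ t, r t ≤ R t := by
    intro t
    exact le_trans (Finset.inf'_le _ (Finset.mem_univ ⟨0, hn⟩))
      (Finset.le_sup' (fun i => y t i / d i) (Finset.mem_univ ⟨0, hn⟩))
  -- general one-step (m-step) bounds
  have hlow : ∀ (x : Fin n → ℝ) (a : ℝ) (m : ℕ), (∀ i, a * d i ≤ x i) →
      ∀ jj, ρ ^ m * a * d jj ≤ Matrix.vecMul x (Q ^ m) jj := by
    intro x a m hx jj
    rw [vecMul_entry']
    have hkey : ∑ i, (a * d i) * (Q ^ m) i jj = a * (ρ ^ m * d jj) := by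
      rw [← heig' m jj, Finset.mul_sum]
      exact Finset.sum_congr rfl fun i _ => by ring
    calc ρ ^ m * a * d jj = ∑ i, (a * d i) * (Q ^ m) i jj := by rw [hkey]; ring
      _ ≤ ∑ i, x i * (Q ^ m) i jj :=
          Finset.sum_le_sum fun i _ => mul_le_mul_of_nonneg_right (hx i) (hQm0 m i jj)
  have hup : ∀ (x : Fin n → ℝ) (a : ℝ) (m : ℕ), (∀ i, x i ≤ a * d i) →
      ∀ jj, Matrix.vecMul x (Q ^ m) jj ≤ ρ ^ m * a * d jj := by
    intro x a m hx jj
    rw [vecMul_entry']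
    have hkey : ∑ i, (a * d i) * (Q ^ m) i jj = a * (ρ ^ m * d jj) := by
      rw [← heig' m jj, Finset.mul_sum]
      exact Finset.sum_congr rfl fun i _ => by ring
    calc ∑ i, x i * (Q ^ m) i jj ≤ ∑ i, (a * d i) * (Q ^ m) i jj :=
          Finset.sum_le_sum fun i _ => mul_le_mul_of_nonneg_right (hx i) (hQm0 m i jj)
      _ = ρ ^ m * a * d jj := by rw [hkey]; ring
  have hr_succ : ∀ t, ρ * r t ≤ r (t + 1) := by
    intro t
    apply Finset.le_inf'
    intro i _
    rw [le_div_iff₀ (hdpos i)]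
    have h2 := hlow (y t) (r t) 1 (h_rd t) i
    rw [← hstep t 1] at h2
    rw [pow_one] at h2
    exact h2
  have hR_succ : ∀ t, R (t + 1) ≤ ρ * R t := by
    intro t
    apply Finset.sup'_le
    intro i _
    rw [div_le_iff₀ (hdpos i)]
    have h2 := hup (y t) (R t) 1 (h_Rd t) i
    rw [← hstep t 1] at h2
    rw [pow_one] at h2
    linarith
  -- contraction constant
  have hnep : (Finset.univ : Finset (Fin n × Fin n)).Nonempty := Finset.univ_nonempty
  set c : ℝ := Finset.univ.inf' hnep (fun p : Fin n × Fin n =>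
    d p.1 * (Q ^ k) p.1 p.2 / (ρ ^ k * d p.2)) with hcdef
  have hcpos : 0 < c := by
    rw [hcdef, Finset.lt_inf'_iff]
    intro p _
    exact div_pos (mul_pos (hdpos p.1) (hQk p.1 p.2)) (mul_pos hρk (hdpos p.2))
  have hcle : ∀ i jj, c * (ρ ^ k * d jj) ≤ d i * (Q ^ k) i jj := by
    intro i jj
    have := Finset.inf'_le (fun p : Fin n × Fin n =>
      d p.1 * (Q ^ k) p.1 p.2 / (ρ ^ k * d p.2)) (Finset.mem_univ (i, jj))
    rw [← hcdef] at this
    exact (le_div_iff₀ (mul_pos hρk (hdpos jj))).mp this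
  -- k-step contraction bounds
  have hconE : ∀ t jj, ρ ^ k * (r t + c * (R t - r t)) * d jj ≤ y (t + k) jj ∧
      y (t + k) jj ≤ ρ ^ k * (R t - c * (R t - r t)) * d jj := by
    intro t jj
    obtain ⟨imax, _, hmax⟩ := Finset.exists_mem_eq_sup' hne (fun i => y t i / d i)
    obtain ⟨imin, _, hmin⟩ := Finset.exists_mem_eq_inf' hne (fun i => y t i / d i)
    have hymax : y t imax = R t * d imax := by
      have hRt : R t = y t imax / d imax := hmax
      rw [hRt]
      exact (div_mul_cancel₀ _ (hdpos imax).ne').symm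
    have hymin : y t imin = r t * d imin := by
      have hrt : r t = y t imin / d imin := hmin
      rw [hrt]
      exact (div_mul_cancel₀ _ (hdpos imin).ne').symm
    have hyk : y (t + k) jj = ∑ i, y t i * (Q ^ k) i jj := by
      rw [hstep t k, vecMul_entry']
    have hRr : 0 ≤ R t - r t := sub_nonneg.mpr (h_rR t)
    constructor
    · -- lower bound
      have hsplit : ∑ i, y t i * (Q ^ k) i jj =
          r t * (ρ ^ k * d jj) + ∑ i, (y t i - r t * d i) * (Q ^ k) i jj := by
        rw [← heig' k jj, Finset.mul_sum, ← Finset.sum_add_distrib]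
        apply Finset.sum_congr rfl
        intro i _; ring
      have hsingle : (y t imax - r t * d imax) * (Q ^ k) imax jj ≤
          ∑ i, (y t i - r t * d i) * (Q ^ k) i jj :=
        Finset.single_le_sum (fun i _ => mul_nonneg (sub_nonneg.mpr (h_rd t i))
          (hQm0 k i jj)) (Finset.mem_univ imax)
      have hterm : (R t - r t) * (c * (ρ ^ k * d jj)) ≤
          (y t imax - r t * d imax) * (Q ^ k) imax jj := by
        rw [hymax, show (R t * d imax - r t * d imax) * (Q ^ k) imax jj =
          (R t - r t) * (d imax * (Q ^ k) imax jj) from by ring]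
        exact mul_le_mul_of_nonneg_left (hcle imax jj) hRr
      rw [hyk]
      nlinarith [hsplit, hsingle, hterm]
    · -- upper bound
      have hsplit : ∑ i, y t i * (Q ^ k) i jj =
          R t * (ρ ^ k * d jj) - ∑ i, (R t * d i - y t i) * (Q ^ k) i jj := by
        rw [← heig' k jj, Finset.mul_sum, ← Finset.sum_sub_distrib]
        apply Finset.sum_congr rfl
        intro i _; ring
      have hsingle : (R t * d imin - y t imin) * (Q ^ k) imin jj ≤
          ∑ i, (R t * d i - y t i) * (Q ^ k) i jj :=
        Finset.single_le_sum (fun i _ => mul_nonneg (sub_nonneg.mpr (h_Rd t i))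
          (hQm0 k i jj)) (Finset.mem_univ imin)
      have hterm : (R t - r t) * (c * (ρ ^ k * d jj)) ≤
          (R t * d imin - y t imin) * (Q ^ k) imin jj := by
        rw [hymin, show (R t * d imin - r t * d imin) * (Q ^ k) imin jj =
          (R t - r t) * (d imin * (Q ^ k) imin jj) from by ring]
        exact mul_le_mul_of_nonneg_left (hcle imin jj) hRr
      rw [hyk]
      nlinarith [hsplit, hsingle, hterm]
  have hrk : ∀ t, ρ ^ k * (r t + c * (R t - r t)) ≤ r (t + k) := by
    intro t
    apply Finset.le_inf'
    intro i _
    rw [le_div_iff₀ (hdpos i)]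
    exact (hconE t i).1
  have hRk : ∀ t, R (t + k) ≤ ρ ^ k * (R t - c * (R t - r t)) := by
    intro t
    apply Finset.sup'_le
    intro i _
    rw [div_le_iff₀ (hdpos i)]
    exact (hconE t i).2
  -- positivity of r for t ≥ k
  obtain ⟨i1, hi1⟩ : ∃ i, 0 < π i := by
    by_contra h
    push_neg at h
    have : ∀ i, π i = 0 := fun i => le_antisymm (h i) (hπ0 i)
    simp [this] at hπ1
  have hrkpos : 0 < r k := by
    rw [hrdef, Finset.lt_inf'_iff]
    intro i _
    apply div_pos _ (hdpos i)
    rw [hyE]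
    calc (0:ℝ) < π i1 * (Q ^ k) i1 i := mul_pos hi1 (hQk i1 i)
      _ ≤ ∑ l, π l * (Q ^ k) l i :=
        Finset.single_le_sum (fun l _ => mul_nonneg (hπ0 l) (hQm0 k l i)) (Finset.mem_univ i1)
  have hrposm : ∀ m, 0 < r (k + m) := by
    intro m
    induction m with
    | zero => simpa using hrkpos
    | succ m ih =>
        have h2 : k + (m + 1) = (k + m) + 1 := rfl
        rw [h2]
        have h3 : 0 < ρ * r (k + m) := mul_pos hρ ih
        linarith [hr_succ (k + m)]
  have hrpos : ∀ t, k ≤ t → 0 < r t := by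
    intro t ht
    obtain ⟨m, rfl⟩ := Nat.exists_eq_add_of_le ht
    exact hrposm m
  -- the contraction quantity
  set q : ℕ → ℝ := fun t => (R t - r t) / r t with hqdef
  have hq0 : ∀ t, k ≤ t → 0 ≤ q t := fun t ht =>
    div_nonneg (sub_nonneg.mpr (h_rR t)) (hrpos t ht).le
  have hq_succ : ∀ t, k ≤ t → q (t + 1) ≤ q t := by
    intro t ht
    have hrt := hrpos t ht
    have hrt1 := hrpos (t + 1) (le_trans ht (Nat.le_succ t))
    have hρr : 0 < ρ * r t := mul_pos hρ hrt
    calc q (t + 1) = (R (t + 1) - r (t + 1)) / r (t + 1) := rfl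
      _ ≤ (R (t + 1) - r (t + 1)) / (ρ * r t) := by
          apply div_le_div_of_nonneg_left (sub_nonneg.mpr (h_rR (t + 1))) hρr (hr_succ t)
      _ ≤ (ρ * R t - ρ * r t) / (ρ * r t) := by
          apply (div_le_div_iff_of_pos_right hρr).mpr
          linarith [hR_succ t, hr_succ t]
      _ = (R t - r t) / r t := by
          rw [show ρ * R t - ρ * r t = ρ * (R t - r t) from by ring,
            mul_div_mul_left _ _ hρ.ne']
  -- geometric contraction of q
  set θ : ℝ := max (1 - 2 * c) 0 with hθdef
  have hθ0 : (0:ℝ) ≤ θ := le_max_right _ _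
  have hθ1 : θ < 1 := max_lt (by linarith) one_pos
  have hq_k : ∀ t, k ≤ t → q (t + k) ≤ θ * q t := by
    intro t ht
    have hrt := hrpos t ht
    have hrtk := hrpos (t + k) (le_trans ht (Nat.le_add_right t k))
    have hnum : R (t + k) - r (t + k) ≤ ρ ^ k * (1 - 2 * c) * (R t - r t) := by
      have h1 := hrk t; have h2 := hRk t; nlinarith
    have hnum0 : 0 ≤ R (t + k) - r (t + k) := sub_nonneg.mpr (h_rR (t + k))
    have hden : ρ ^ k * r t ≤ r (t + k) := by
      have h1 := hrk t
      nlinarith [mul_nonneg hcpos.le (sub_nonneg.mpr (h_rR t))]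
    have hdpos' : (0:ℝ) < ρ ^ k * r t := mul_pos hρk hrt
    calc q (t + k) = (R (t + k) - r (t + k)) / r (t + k) := rfl
      _ ≤ (R (t + k) - r (t + k)) / (ρ ^ k * r t) :=
          div_le_div_of_nonneg_left hnum0 hdpos' hden
      _ ≤ (ρ ^ k * (1 - 2 * c) * (R t - r t)) / (ρ ^ k * r t) :=
          (div_le_div_iff_of_pos_right hdpos').mpr hnum
      _ = (1 - 2 * c) * ((R t - r t) / r t) := by
          rw [show ρ ^ k * (1 - 2 * c) * (R t - r t)
              = ρ ^ k * ((1 - 2 * c) * (R t - r t)) from by ring,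
            mul_div_mul_left _ _ hρk.ne', mul_div_assoc]
      _ ≤ θ * q t := mul_le_mul_of_nonneg_right (le_max_left _ _) (hq0 t ht)
  have hgeo : ∀ m, q (k + m * k) ≤ θ ^ m * q k := by
    intro m
    induction m with
    | zero => simp
    | succ m ih =>
        have he : k + (m + 1) * k = (k + m * k) + k := by ring
        rw [he]
        calc q ((k + m * k) + k) ≤ θ * q (k + m * k) :=
              hq_k _ (Nat.le_add_right k (m * k))
          _ ≤ θ * (θ ^ m * q k) := mul_le_mul_of_nonneg_left ih hθ0
          _ = θ ^ (m + 1) * q k := by ring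
  have hmono : ∀ s, k ≤ s → ∀ t, s ≤ t → q t ≤ q s := by
    intro s hks t hst
    induction t, hst using Nat.le_induction with
    | base => exact le_refl _
    | succ t hst ih => exact le_trans (hq_succ t (le_trans hks hst)) ih
  have hbound : ∀ t, k ≤ t → q t ≤ θ ^ (t / k - 1) * q k := by
    intro t ht
    have h1 : 1 ≤ t / k := (Nat.one_le_div_iff hkpos).mpr ht
    have h2 : k + (t / k - 1) * k ≤ t := by
      have h3 : (t / k - 1 + 1) * k = (t / k) * k := by congr 1; omega
      have h4 : (t / k) * k ≤ t := Nat.div_mul_le_self t k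
      calc k + (t / k - 1) * k = (t / k - 1 + 1) * k := by ring
        _ = (t / k) * k := h3
        _ ≤ t := h4
    exact le_trans (hmono (k + (t / k - 1) * k) (Nat.le_add_right _ _) t h2)
      (hgeo (t / k - 1))
  have hdiv : Tendsto (fun t : ℕ => t / k - 1) atTop atTop := by
    apply tendsto_atTop_atTop.mpr
    intro b
    refine ⟨k * (b + 1) + k, fun a ha => ?_⟩
    have h5 : (b + 1) * k ≤ a := by
      rw [mul_comm]
      exact le_trans (Nat.le_add_right _ k) ha
    have h6 : (b + 1) ≤ a / k := (Nat.le_div_iff_mul_le hkpos).mpr h5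
    omega
  have hbt : Tendsto (fun t : ℕ => θ ^ (t / k - 1) * q k) atTop (nhds 0) := by
    have := ((tendsto_pow_atTop_nhds_zero_of_lt_one hθ0 hθ1).comp hdiv).mul_const (q k)
    simpa using this
  have hqt : Tendsto q atTop (nhds 0) :=
    squeeze_zero' (eventually_atTop.mpr ⟨k, hq0⟩) (eventually_atTop.mpr ⟨k, hbound⟩) hbt
  -- conclusion
  rw [tendsto_iff_dist_tendsto_zero]
  apply squeeze_zero' (Eventually.of_forall fun t => dist_nonneg) ?_ hqt
  refine eventually_atTop.mpr ⟨k, fun t ht => ?_⟩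
  have hrt := hrpos t ht
  have hRt : 0 < R t := lt_of_lt_of_le hrt (h_rR t)
  have hS1 : r t ≤ ∑ i, y t i := by
    calc r t = ∑ i, r t * d i := by rw [← Finset.mul_sum, hd1, mul_one]
      _ ≤ ∑ i, y t i := Finset.sum_le_sum fun i _ => h_rd t i
  have hS2 : ∑ i, y t i ≤ R t := by
    calc ∑ i, y t i ≤ ∑ i, R t * d i := Finset.sum_le_sum fun i _ => h_Rd t i
      _ = R t := by rw [← Finset.mul_sum, hd1, mul_one]
  have hSpos : 0 < ∑ i, y t i := lt_of_lt_of_le hrt hS1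
  have hdj1 : d j ≤ 1 := by
    rw [← hd1]; exact Finset.single_le_sum (fun i _ => hd0 i) (Finset.mem_univ j)
  have hqt0 : 0 ≤ q t := hq0 t ht
  have hup1 : y t j / ∑ i, y t i ≤ R t * d j / r t :=
    div_le_div₀ (mul_nonneg hRt.le (hd0 j)) (h_Rd t j) hrt hS1
  have hlow1 : r t * d j / R t ≤ y t j / ∑ i, y t i :=
    div_le_div₀ (hy0 t j) (h_rd t j) hSpos hS2
  have e1 : R t * d j / r t = d j + q t * d j := by
    rw [hqdef]
    field_simp
    ring
  have h6 : (R t - r t) / R t ≤ (R t - r t) / r t :=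
    div_le_div_of_nonneg_left (sub_nonneg.mpr (h_rR t)) hrt (h_rR t)
  have e2 : d j * ((R t - r t) / R t) ≤ d j * q t :=
    mul_le_mul_of_nonneg_left h6 (hd0 j)
  have e3 : r t * d j / R t = d j - d j * ((R t - r t) / R t) := by
    field_simp
    ring
  have hdq : q t * d j ≤ q t := by
    calc q t * d j ≤ q t * 1 := mul_le_mul_of_nonneg_left hdj1 hqt0
      _ = q t := mul_one _
  rw [Real.dist_eq, abs_sub_le_iff]
  constructor
  · linarith
  · have : d j - d j * q t ≤ y t j / ∑ i, y t i := by linarith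
    nlinarith
end

section
/- Let n ≥ 2 and let P be the n×n matrix of the complete graph, with p_{jk} = 1/(n−1) for j ≠ k and p_{jj} = 0. Then for every subset I of {1,…,n}: Σ_{k∈I, j∉I} p_{jk} = |I|·(n−|I|)/(n−1). Consequently, for reals z > 0, r > 0 and nonempty I, the expected one-step change (z/n)·(2·|I|·(n−|I|)/(n−1)) − r·|I| equals zero if and only if |I|/n = 1 − r(n−1)/(2z). Hence the quasi-stationary density of infected nodes of the single infection epidemic spreading model on the complete graph is i_s = 1 − r(n−1)/(2z). -/
open Finset

theorem sum_sum_compl_eq_card_mul_card_compl_mul {α R : Type*} [Fintype α] [DecidableEq α]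
    [Semiring R] (P : Matrix α α R) (c : R) (hP : ∀ j k, j ≠ k → P j k = c)
    (I : Finset α) : ∑ k ∈ I, ∑ j ∈ Iᶜ, P j k = #I * #Iᶜ * c := by
  have hoff : ∀ k ∈ I, ∀ j ∈ Iᶜ, P j k = c := fun k hk j hj =>
    hP j k fun hjk => mem_compl.mp hj (hjk ▸ hk)
  rw [sum_congr rfl fun k hk => sum_congr rfl (hoff k hk)]
  simp only [sum_const, nsmul_eq_mul, mul_assoc]

theorem natCast_card_compl {α R : Type*} [Fintype α] [DecidableEq α] [AddGroupWithOne R]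
    (I : Finset α) : (#Iᶜ : R) = Fintype.card α - #I := by
  rw [card_compl, Nat.cast_sub (card_le_univ I)]

/-- Both sides are nonzero multiples of `2z(N - x) - rN(N - 1)`. -/
theorem sub_mul_eq_zero_iff_div_eq {K : Type*} [Field K] [NeZero (2 : K)] {N x z r : K}
    (hN : N ≠ 0) (hN1 : N - 1 ≠ 0) (hx : x ≠ 0) (hz : z ≠ 0) :
    z / N * (2 * x * (N - x) / (N - 1)) - r * x = 0 ↔ x / N = 1 - r * (N - 1) / (2 * z) := by
  have h2 : (2 : K) ≠ 0 := two_ne_zero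
  have hL : z / N * (2 * x * (N - x) / (N - 1)) - r * x
      = x / (N * (N - 1)) * (2 * z * (N - x) - r * N * (N - 1)) := by
    field_simp
  have hR : 1 - r * (N - 1) / (2 * z) - x / N
      = (2 * z * (N - x) - r * N * (N - 1)) / (2 * z * N) := by
    field_simp
    ring
  rw [hL, eq_comm (a := x / N), ← sub_eq_zero (a := 1 - _), hR]
  simp [hx, hN, hN1, hz, h2]

/-- On the complete graph (where `p_{jk} = 1/(n-1)` off the diagonal and `0` on it),
for every set `I` of infected nodes `∑_{k∈I, j∉I} p_{jk} = |I|(n-|I|)/(n-1)`, and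
consequently for `z, r > 0` the expected one-step change of the number of infected nodes
vanishes exactly at the quasi-stationary density `|I|/n = 1 - r(n-1)/(2z)`. -/
theorem siesm_complete_graph_quasi_stationary (n : ℕ) (hn : 2 ≤ n)
    (P : Matrix (Fin n) (Fin n) ℝ)
    (hP : ∀ j k, P j k = if j = k then 0 else 1 / ((n : ℝ) - 1)) :
    (∀ I : Finset (Fin n),
        ∑ k ∈ I, ∑ j ∈ Iᶜ, P j k = (I.card : ℝ) * ((n : ℝ) - I.card) / ((n : ℝ) - 1)) ∧
      (∀ z r : ℝ, 0 < z → 0 < r → ∀ I : Finset (Fin n), I.Nonempty →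
        ((z / n) * (2 * (I.card : ℝ) * ((n : ℝ) - I.card) / ((n : ℝ) - 1))
            - r * I.card = 0 ↔
          (I.card : ℝ) / n = 1 - r * ((n : ℝ) - 1) / (2 * z))) := by
  have hn2 : (2 : ℝ) ≤ n := by exact_mod_cast hn
  refine ⟨fun I => ?_, fun z r hz _ I hI => ?_⟩
  · have hoff : ∀ j k, j ≠ k → P j k = 1 / ((n : ℝ) - 1) := fun j k hjk => by
      simp [hP, hjk]
    rw [sum_sum_compl_eq_card_mul_card_compl_mul P _ hoff, natCast_card_compl,
      Fintype.card_fin, mul_one_div]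
  · exact sub_mul_eq_zero_iff_div_eq (by positivity) (by linarith)
      (Nat.cast_ne_zero.mpr hI.card_pos.ne') hz.ne'
end
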